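/- Let $x_0,\ldots,x_t$ and $\beta$ be integers, define $x_\nu := \beta + \min_{j_1+j_2=\nu-1,\ j_1,j_2\ge 0}(x_{j_1}+x_{j_2})$ for $\nu \ge t+1$, and set $\delta := \min_{0\le j\le t}(x_j+\beta)/(j+1)$ (a rational number). Then $x_\nu/\nu \to \delta$ as $\nu\to\infty$. -/

import Mathlib

/-!
With `y ν := x ν + β` the recursion says `y ν = min_{a + b + 1 = ν} (y a + y b)` for `ν > t`, and
strong induction gives `δ (ν + 1) ≤ y ν` for all `ν`. If `m ≤ t` attains `δ`, i.e.
`y m = δ (m + 1)`, then `y (n + m + 1) ≤ y n + y m` for `n ≥ t`, so `y ν - δ (ν + 1)` does not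
increase along steps of length `m + 1` and is bounded above by its maximum over one period.
Hence `x ν - δ ν` is bounded and `x ν / ν → δ`.
-/

open Filter Topology Finset

theorem exists_forall_ge_le_of_add_le {α : Type*} [Preorder α] [IsDirectedOrder α] [Nonempty α]
    {g : ℕ → α} {t p : ℕ} (hp : 0 < p) (h : ∀ n ≥ t, g (n + p) ≤ g n) :
    ∃ U, ∀ n ≥ t, g n ≤ U := by
  obtain ⟨U, hU⟩ := ((Set.finite_Ico t (t + p)).image g).bddAbove
  refine ⟨U, fun n hn => ?_⟩
  induction n using Nat.strong_induction_on with
  | _ n ih =>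
    by_cases hnp : n < t + p
    · exact hU (Set.mem_image_of_mem g ⟨hn, hnp⟩)
    · obtain ⟨k, rfl⟩ : ∃ k, n = k + p := ⟨n - p, by omega⟩
      exact (h k (by omega)).trans (ih k (by omega) (by omega))

theorem mul_add_one_le_of_exists_split {α : Type*} [Semiring α] [PartialOrder α]
    [IsOrderedAddMonoid α] {t : ℕ} {y : ℕ → α} {c : α}
    (hinit : ∀ j ≤ t, c * (j + 1) ≤ y j)
    (hsplit : ∀ ν, t < ν → ∃ a b, a + b + 1 = ν ∧ y a + y b ≤ y ν) (ν : ℕ) :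
    c * (ν + 1) ≤ y ν := by
  induction ν using Nat.strong_induction_on with
  | _ ν ih =>
    by_cases hν : ν ≤ t
    · exact hinit ν hν
    · obtain ⟨a, b, rfl, hab⟩ := hsplit ν (by omega)
      have hcast : ((a + b + 1 : ℕ) + 1 : α) = (a + 1) + (b + 1) := by push_cast; abel
      calc c * ((a + b + 1 : ℕ) + 1 : α) = c * (a + 1) + c * (b + 1) := by rw [hcast, mul_add]
        _ ≤ y a + y b := add_le_add (ih a (by omega)) (ih b (by omega))
        _ ≤ y (a + b + 1) := hab

theorem tendsto_div_natCast_of_sub_mul_bounded {f : ℕ → ℝ} {c L U : ℝ}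
    (hL : ∀ᶠ n in atTop, L ≤ f n - c * n) (hU : ∀ᶠ n in atTop, f n - c * n ≤ U) :
    Tendsto (fun n => f n / n) atTop (𝓝 c) := by
  have hlim (C : ℝ) : Tendsto (fun n : ℕ => c + C / n) atTop (𝓝 c) := by
    simpa using tendsto_const_nhds.add (tendsto_const_div_atTop_nhds_zero_nat C)
  have hsplit : ∀ᶠ n : ℕ in atTop, f n / n = c + (f n - c * n) / n := by
    filter_upwards [eventually_ne_atTop 0] with n hn
    field_simp
    ring
  refine tendsto_of_tendsto_of_tendsto_of_le_of_le' (hlim L) (hlim U) ?_ ?_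
  · filter_upwards [hL, hsplit] with n hn hfn
    rw [hfn]
    gcongr
  · filter_upwards [hU, hsplit] with n hn hfn
    rw [hfn]
    gcongr

section Recurrence

variable {α : Type*} [LinearOrder α] [Add α] {β : α} {x : ℕ → α}

theorem exists_split_of_eq_add_inf' {ν : ℕ} {hne : (range ν).Nonempty}
    (h : x ν = β + (range ν).inf' hne (fun j => x j + x (ν - 1 - j))) :
    ∃ a b, a + b + 1 = ν ∧ x ν = β + (x a + x b) := by
  obtain ⟨a, ha, hmin⟩ := exists_mem_eq_inf' hne (fun j => x j + x (ν - 1 - j))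
  exact ⟨a, ν - 1 - a, by have := mem_range.mp ha; omega, h.trans (congrArg (β + ·) hmin)⟩

theorem le_add_of_eq_add_inf' [AddLeftMono α] {a b : ℕ} {hne : (range (a + b + 1)).Nonempty}
    (h : x (a + b + 1) = β + (range (a + b + 1)).inf' hne (fun j => x j + x (a + b + 1 - 1 - j))) :
    x (a + b + 1) ≤ β + (x a + x b) := by
  have hle := inf'_le (fun j => x j + x (a + b + 1 - 1 - j))
    (mem_range.mpr (by omega : a < a + b + 1))
  rw [show a + b + 1 - 1 - a = b by omega] at hle
  exact h.trans_le (add_le_add_right hle β)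

end Recurrence

theorem stmt3 (t : ℕ) (β : ℤ) (x : ℕ → ℤ)
    (hrec : ∀ ν : ℕ, ∀ _hν : t + 1 ≤ ν,
      x ν = β + (Finset.range ν).inf' (Finset.nonempty_range_iff.mpr (by omega))
        (fun j => x j + x (ν - 1 - j))) :
    Filter.Tendsto (fun ν : ℕ => (x ν : ℝ) / ν) Filter.atTop
      (nhds ((Finset.range (t + 1)).inf' (Finset.nonempty_range_iff.mpr (by omega))
        (fun j => ((x j : ℝ) + β) / (j + 1)))) := by
  set δ := (range (t + 1)).inf' (nonempty_range_iff.mpr (by omega))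
    (fun j => ((x j : ℝ) + β) / (j + 1))
  have hinit (j : ℕ) (hj : j ≤ t) : δ * (j + 1) ≤ x j + β :=
    (le_div_iff₀ (by positivity)).mp (inf'_le _ (mem_range.mpr (by omega)))
  have hlow := mul_add_one_le_of_exists_split (y := fun ν => (x ν : ℝ) + β) hinit fun ν hν => by
    obtain ⟨a, b, rfl, h⟩ := exists_split_of_eq_add_inf' (hrec _ hν)
    exact ⟨a, b, rfl, by rw [h]; push_cast; linarith⟩
  obtain ⟨m, -, hδm⟩ := exists_mem_eq_inf' (nonempty_range_iff.mpr (by omega : t + 1 ≠ 0))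
    (fun j => ((x j : ℝ) + β) / (j + 1))
  have hm_eq : δ * (m + 1) = x m + β := (eq_div_iff (by positivity)).mp hδm
  obtain ⟨U, hU⟩ := exists_forall_ge_le_of_add_le (g := fun n => (x n : ℝ) + β - δ * (n + 1))
    (t := t) (p := m + 1) m.succ_pos fun n hn => by
      have h : (x (n + (m + 1)) : ℝ) ≤ β + (x n + x m) := by
        exact_mod_cast le_add_of_eq_add_inf' (hrec (n + m + 1) (by omega))
      push_cast
      linarith
  refine tendsto_div_natCast_of_sub_mul_bounded (L := δ - β) (U := U + δ - β) ?_ ?_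
  · exact .of_forall fun n => by linarith [hlow n]
  · filter_upwards [eventually_ge_atTop t] with n hn
    linarith [hU n hn]
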